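/- arXiv:1505.07893 — 3 statements merged into one kernel-verified Lean document; each statement's English description precedes it below -/
import Mathlib

section
/- For t > 0, the map x ↦ exp(-t·A_n)·x is injective on R^{n+2} and maps the closed simplex Δ_n = {(x_0,...,x_{n+1}) : 0 = x_0 ≤ x_1 ≤ ... ≤ x_n ≤ x_{n+1} = 1} into its interior {x ∈ Δ_n : 0 < x_1 < ... < x_n < 1}, provided n ≥ 1. -/
/-!
Write `D` for the difference matrix `(D x)ᵢ = xᵢ₊₁ - xᵢ` and `P` for the projection onto the
interior coordinates. Then `A_n = P Dᵀ D`, so `D A_n = B D` with `B = D P Dᵀ`, the Laplacian of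
the path with Neumann boundary conditions, and hence `D exp(-t A_n) = exp(-t B) D`: the increments
of `exp(-t A_n) x` are `exp(-t B)` applied to the increments of `x`. Off the diagonal `-t B` is
nonnegative, and positive exactly along the edges of the (connected) path graph, so `exp(-t B)`
is entrywise positive. A point of `Δ_n` has nonnegative increments, not all zero, so its image
has positive increments; its endpoints are fixed because the boundary rows of `A_n` vanish.
Injectivity holds because a matrix exponential is invertible.
-/

open Matrix

/-- The matrix `A_n` from the paper: `(n+2) × (n+2)`, first and last rows zero,
interior row `i` (for `1 ≤ i ≤ n`) has entries `-1, 2, -1` in columns `i-1, i, i+1`. -/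
noncomputable def coarseningMatrix (n : ℕ) : Matrix (Fin (n + 2)) (Fin (n + 2)) ℝ :=
  fun i j =>
    if (i : ℕ) = 0 ∨ (i : ℕ) = n + 1 then 0
    else if j = i then 2
    else if (j : ℕ) + 1 = (i : ℕ) ∨ (i : ℕ) + 1 = (j : ℕ) then -1
    else 0

/-- The closed simplex `Δ_n` of configurations `0 = x_0 ≤ x_1 ≤ ⋯ ≤ x_n ≤ x_{n+1} = 1`. -/
def simplexDelta (n : ℕ) : Set (Fin (n + 2) → ℝ) :=
  {x | x 0 = 0 ∧ x (Fin.last (n + 1)) = 1 ∧ Monotone x}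

/-- The interior of `Δ_n`: all inequalities strict. -/
def simplexDeltaInterior (n : ℕ) : Set (Fin (n + 2) → ℝ) :=
  {x | x 0 = 0 ∧ x (Fin.last (n + 1)) = 1 ∧ StrictMono x}

namespace Matrix

section Exp

variable {m k 𝕂 : Type*} [Fintype m] [DecidableEq m] [Fintype k] [DecidableEq k] [RCLike 𝕂]

theorem hasSum_exp (A : Matrix m m 𝕂) :
    HasSum (fun n => (n.factorial⁻¹ : 𝕂) • A ^ n) (NormedSpace.exp A) := by
  open scoped Norms.Operator in exact NormedSpace.exp_series_hasSum_exp' A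

theorem exp_mul_eq_mul_exp {A : Matrix m m 𝕂} {B : Matrix k k 𝕂} {D : Matrix k m 𝕂}
    (h : B * D = D * A) : NormedSpace.exp B * D = D * NormedSpace.exp A := by
  have hpow : ∀ n : ℕ, B ^ n * D = D * A ^ n := by
    intro n
    induction n with
    | zero => simp
    | succ n ih =>
      rw [pow_succ, Matrix.mul_assoc, h, ← Matrix.mul_assoc, ih, pow_succ, Matrix.mul_assoc]
  have hB : HasSum (fun n => (n.factorial⁻¹ : 𝕂) • (B ^ n * D)) (NormedSpace.exp B * D) := by
    simpa [Function.comp_def, addMonoidHomMulRight] using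
      (hasSum_exp B).map (addMonoidHomMulRight D) (continuous_id.matrix_mul continuous_const)
  have hA : HasSum (fun n => (n.factorial⁻¹ : 𝕂) • (D * A ^ n)) (D * NormedSpace.exp A) := by
    simpa [Function.comp_def, addMonoidHomMulLeft] using
      (hasSum_exp A).map (addMonoidHomMulLeft D) (continuous_const.matrix_mul continuous_id)
  simp only [hpow] at hB
  exact hB.unique hA

theorem exp_row_eq_of_row_eq_zero {M : Matrix m m 𝕂} {b : m} (h : M b = 0) :
    NormedSpace.exp M b = (1 : Matrix m m 𝕂) b := by
  -- `R` is row `b` of the identity, and `M b = 0` says that `0 * R = R * M`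
  let R : Matrix Unit m 𝕂 := of fun _ => (1 : Matrix m m 𝕂) b
  have hR : ∀ N : Matrix m m 𝕂, R * N = of fun _ => N b := by
    intro N
    ext _ j
    simp [R, mul_apply, one_apply]
  have := exp_mul_eq_mul_exp (B := (0 : Matrix Unit Unit 𝕂)) (D := R) (A := M)
    (by rw [Matrix.zero_mul, hR, h]; rfl)
  rw [NormedSpace.exp_zero, Matrix.one_mul, hR] at this
  exact (congrFun this ()).symm

theorem exp_mulVec_apply_of_row_eq_zero {M : Matrix m m 𝕂} {b : m} (h : M b = 0)
    (x : m → 𝕂) : (NormedSpace.exp M *ᵥ x) b = x b := by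
  rw [mulVec, exp_row_eq_of_row_eq_zero h, ← mulVec, one_mulVec]

end Exp

section Positivity

variable {ι : Type*} [Fintype ι] [DecidableEq ι]

theorem pow_apply_pos_of_walk {R : Type*} [Semiring R] [PartialOrder R] [IsStrictOrderedRing R]
    {P : Matrix ι ι R} {G : SimpleGraph ι} (hP : ∀ i j, 0 ≤ P i j)
    (hPG : ∀ i j, G.Adj i j → 0 < P i j) {i j : ι} (p : G.Walk i j) :
    0 < (P ^ p.length) i j := by
  induction p with
  | nil => simp
  | @cons i l j hil p ih =>
    rw [SimpleGraph.Walk.length_cons, pow_succ', mul_apply]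
    exact Finset.sum_pos' (fun l _ => mul_nonneg (hP _ l) (pow_apply_nonneg hP _ l j))
      ⟨l, Finset.mem_univ _, mul_pos (hPG _ _ hil) ih⟩

theorem exp_apply_pos_of_pow_apply_pos {P : Matrix ι ι ℝ} (hP : ∀ i j, 0 ≤ P i j) {n : ℕ}
    {i j : ι} (hn : 0 < (P ^ n) i j) : 0 < NormedSpace.exp P i j := by
  have hij : HasSum (fun n => (n.factorial⁻¹ : ℝ) * (P ^ n) i j) (NormedSpace.exp P i j) :=
    Pi.hasSum.mp (Pi.hasSum.mp (hasSum_exp P) i) j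
  rw [← hij.tsum_eq]
  exact hij.summable.tsum_pos (fun k => mul_nonneg (by positivity) (pow_apply_nonneg hP k i j)) n
    (mul_pos (by positivity) hn)

theorem exp_smul_one (c : ℝ) :
    NormedSpace.exp (c • (1 : Matrix ι ι ℝ)) = Real.exp c • (1 : Matrix ι ι ℝ) := by
  rw [smul_one_eq_diagonal, exp_diagonal, smul_one_eq_diagonal]
  congr 1
  ext
  simp [Pi.coe_exp, Real.exp_eq_exp_ℝ]

theorem exp_apply_pos_of_connected {Q : Matrix ι ι ℝ} {G : SimpleGraph ι} (hG : G.Connected)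
    (hQ : ∀ i j, i ≠ j → 0 ≤ Q i j) (hQG : ∀ i j, G.Adj i j → 0 < Q i j) (i j : ι) :
    0 < NormedSpace.exp Q i j := by
  obtain ⟨p⟩ := hG.preconnected i j
  -- shifting by `c • 1` makes `Q` nonnegative without touching its off-diagonal entries
  set c := ∑ k, |Q k k|
  have hP : ∀ i j, 0 ≤ (Q + c • 1) i j := by
    intro i j
    by_cases h : i = j
    · subst h
      have : |Q i i| ≤ c :=
        Finset.single_le_sum (f := fun k => |Q k k|) (fun _ _ => abs_nonneg _) (Finset.mem_univ i)
      simp only [add_apply, smul_apply, one_apply_eq, smul_eq_mul, mul_one]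
      linarith [neg_abs_le (Q i i)]
    · simpa [one_apply_ne h] using hQ i j h
  have hPG : ∀ i j, G.Adj i j → 0 < (Q + c • 1) i j := fun i j h => by
    simpa [one_apply_ne (G.ne_of_adj h)] using hQG i j h
  have hexp : NormedSpace.exp Q = NormedSpace.exp (Q + c • 1) * NormedSpace.exp ((-c) • 1) := by
    rw [← exp_add_of_commute _ _ ((Commute.one_right _).smul_right (-c))]
    simp
  rw [hexp, exp_smul_one, Matrix.mul_smul, Matrix.mul_one, smul_apply, smul_eq_mul]
  exact mul_pos (Real.exp_pos _)
    (exp_apply_pos_of_pow_apply_pos hP (pow_apply_pos_of_walk hP hPG p))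

end Positivity

theorem mulVec_apply_pos {ι κ R : Type*} [Fintype κ] [Semiring R] [PartialOrder R]
    [IsStrictOrderedRing R] {M : Matrix ι κ R} (hM : ∀ i j, 0 < M i j) {v : κ → R} (hv : 0 ≤ v)
    (hv0 : v ≠ 0) (i : ι) : 0 < (M *ᵥ v) i := by
  obtain ⟨j, hj⟩ := Function.ne_iff.mp hv0
  exact Finset.sum_pos' (fun j _ => mul_nonneg (hM i j).le (hv j))
    ⟨j, Finset.mem_univ _, mul_pos (hM i j) ((hv j).lt_of_ne' hj)⟩

end Matrix

theorem Fin.sum_ite_eq_succ {M : Type*} [AddCommMonoid M] {n : ℕ} (f : Fin (n + 1) → M)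
    (j : Fin (n + 2)) :
    ∑ x, (if j = x.succ then f x else 0) = if h : j = 0 then 0 else f (j.pred h) := by
  induction j using Fin.cases <;> simp [Fin.succ_inj, eq_comm (a := (0 : Fin (n + 2)))]

theorem Fin.sum_ite_eq_castSucc {M : Type*} [AddCommMonoid M] {n : ℕ} (f : Fin (n + 1) → M)
    (j : Fin (n + 2)) :
    ∑ x, (if j = x.castSucc then f x else 0) =
      if h : j = Fin.last _ then 0 else f (j.castPred h) := by
  induction j using Fin.lastCases <;> simp [Fin.castSucc_inj, eq_comm (a := Fin.last (n + 1))]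

def diffMatrix (n : ℕ) : Matrix (Fin (n + 1)) (Fin (n + 2)) ℝ :=
  of fun i => Pi.single i.succ 1 - Pi.single i.castSucc 1

def interiorProj (n : ℕ) : Matrix (Fin (n + 2)) (Fin (n + 2)) ℝ :=
  diagonal fun k => if (k : ℕ) = 0 ∨ (k : ℕ) = n + 1 then 0 else 1

def neumannLaplacian (n : ℕ) : Matrix (Fin (n + 1)) (Fin (n + 1)) ℝ :=
  diffMatrix n * interiorProj n * (diffMatrix n)ᵀ

theorem diffMatrix_mulVec {n : ℕ} (x : Fin (n + 2) → ℝ) (i : Fin (n + 1)) :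
    (diffMatrix n *ᵥ x) i = x i.succ - x i.castSucc := by
  simp [diffMatrix, mulVec, dotProduct, sub_mul, Finset.sum_sub_distrib, Pi.single_apply]

theorem diffMatrix_mul_apply {n : ℕ} {ι : Type*} (M : Matrix (Fin (n + 2)) ι ℝ)
    (i : Fin (n + 1)) (j : ι) :
    (diffMatrix n * M) i j = M i.succ j - M i.castSucc j := by
  simp [diffMatrix, mul_apply, sub_mul, Finset.sum_sub_distrib, Pi.single_apply]

theorem mul_diffMatrix_apply {n : ℕ} {ι : Type*} (M : Matrix ι (Fin (n + 1)) ℝ) (i : ι)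
    (j : Fin (n + 2)) :
    (M * diffMatrix n) i j = (if h : j = 0 then 0 else M i (j.pred h)) -
      (if h : j = Fin.last _ then 0 else M i (j.castPred h)) := by
  simp only [mul_apply, diffMatrix, of_apply, Pi.sub_apply, Pi.single_apply, mul_sub, mul_ite,
    mul_one, mul_zero, Finset.sum_sub_distrib, Fin.sum_ite_eq_succ, Fin.sum_ite_eq_castSucc]

theorem coarseningMatrix_eq (n : ℕ) :
    coarseningMatrix n = interiorProj n * (diffMatrix n)ᵀ * diffMatrix n := by
  ext k j
  rw [mul_diffMatrix_apply]
  simp only [interiorProj, diagonal_mul, transpose_apply, diffMatrix, of_apply, Pi.sub_apply,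
    Pi.single_apply, Fin.succ_pred, Fin.castSucc_castPred]
  simp only [coarseningMatrix, Fin.ext_iff, Fin.val_zero, Fin.val_last, Fin.val_castSucc,
    Fin.val_succ, Fin.val_pred, Fin.coe_castPred]
  split_ifs <;> simp only [Fin.ext_iff, Fin.val_zero] at * <;> first | omega | norm_num

theorem coarseningMatrix_apply_of_boundary {n : ℕ} {b : Fin (n + 2)}
    (hb : (b : ℕ) = 0 ∨ (b : ℕ) = n + 1) (j : Fin (n + 2)) : coarseningMatrix n b j = 0 :=
  if_pos hb

theorem diffMatrix_mul_coarseningMatrix (n : ℕ) :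
    diffMatrix n * coarseningMatrix n = neumannLaplacian n * diffMatrix n := by
  simp only [coarseningMatrix_eq, neumannLaplacian, Matrix.mul_assoc]

theorem neumannLaplacian_apply_nonpos {n : ℕ} {i j : Fin (n + 1)} (h : i ≠ j) :
    neumannLaplacian n i j ≤ 0 := by
  rw [neumannLaplacian, Matrix.mul_assoc, diffMatrix_mul_apply]
  simp only [interiorProj, diagonal_mul, transpose_apply, diffMatrix, of_apply, Pi.sub_apply,
    Pi.single_apply, Fin.ext_iff, Fin.val_succ, Fin.val_castSucc]
  rw [Ne, Fin.ext_iff] at h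
  split_ifs <;> (try simp only [false_or] at *) <;> first | omega | norm_num

theorem neumannLaplacian_apply_of_adj {n : ℕ} {i j : Fin (n + 1)}
    (h : (SimpleGraph.pathGraph (n + 1)).Adj i j) : neumannLaplacian n i j = -1 := by
  rw [neumannLaplacian, Matrix.mul_assoc, diffMatrix_mul_apply]
  simp only [interiorProj, diagonal_mul, transpose_apply, diffMatrix, of_apply, Pi.sub_apply,
    Pi.single_apply, Fin.ext_iff, Fin.val_succ, Fin.val_castSucc]
  rw [SimpleGraph.pathGraph_adj] at h
  have := j.isLt
  split_ifs <;> (try simp only [false_or] at *) <;> first | omega | norm_num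

theorem exp_neg_smul_neumannLaplacian_apply_pos {n : ℕ} {t : ℝ} (ht : 0 < t)
    (i j : Fin (n + 1)) :
    0 < NormedSpace.exp ((-t) • neumannLaplacian n) i j :=
  exp_apply_pos_of_connected (SimpleGraph.pathGraph_connected n)
    (fun _ _ h => by
      simpa [Matrix.smul_apply] using mul_nonneg_of_nonpos_of_nonpos (neg_nonpos.mpr ht.le)
        (neumannLaplacian_apply_nonpos h))
    (fun _ _ h => by simpa [Matrix.smul_apply, neumannLaplacian_apply_of_adj h] using ht) i j

theorem diffMatrix_mul_exp_neg_smul_coarseningMatrix (n : ℕ) (t : ℝ) :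
    diffMatrix n * NormedSpace.exp ((-t) • coarseningMatrix n) =
      NormedSpace.exp ((-t) • neumannLaplacian n) * diffMatrix n :=
  (exp_mul_eq_mul_exp (by
    rw [Matrix.smul_mul, Matrix.mul_smul, diffMatrix_mul_coarseningMatrix])).symm

theorem diffMatrix_mulVec_nonneg {n : ℕ} {x : Fin (n + 2) → ℝ} (hx : Monotone x) :
    0 ≤ diffMatrix n *ᵥ x := fun i => by
  simpa [diffMatrix_mulVec] using Fin.monotone_iff_le_succ.mp hx i

theorem diffMatrix_mulVec_ne_zero {n : ℕ} {x : Fin (n + 2) → ℝ}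
    (hx : x 0 < x (Fin.last _)) : diffMatrix n *ᵥ x ≠ 0 := by
  intro h
  have : Antitone x := Fin.antitone_iff_succ_le.mpr fun i => by
    simpa [diffMatrix_mulVec, sub_eq_zero] using (congrFun h i).le
  exact (this (Fin.zero_le _)).not_gt hx

theorem exp_neg_coarseningMatrix_maps_into_interior_general (n : ℕ) (t : ℝ) (ht : 0 < t) :
    Function.Injective (fun x : Fin (n + 2) → ℝ =>
        (NormedSpace.exp ((-t) • coarseningMatrix n)).mulVec x) ∧
      ∀ x ∈ simplexDelta n,
        (NormedSpace.exp ((-t) • coarseningMatrix n)).mulVec x ∈ simplexDeltaInterior n := by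
  refine ⟨mulVec_injective_iff_isUnit.mpr (isUnit_exp _), ?_⟩
  rintro x ⟨hx0, hx1, hx⟩
  have hfix : ∀ b : Fin (n + 2), ((b : ℕ) = 0 ∨ (b : ℕ) = n + 1) →
      (NormedSpace.exp ((-t) • coarseningMatrix n) *ᵥ x) b = x b := fun b hb =>
    exp_mulVec_apply_of_row_eq_zero
      (funext fun j => by simp [Matrix.smul_apply, coarseningMatrix_apply_of_boundary hb]) x
  refine ⟨by rw [hfix 0 (Or.inl rfl), hx0], by rw [hfix _ (Or.inr rfl), hx1], ?_⟩
  have hinc : diffMatrix n *ᵥ (NormedSpace.exp ((-t) • coarseningMatrix n) *ᵥ x) =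
      NormedSpace.exp ((-t) • neumannLaplacian n) *ᵥ (diffMatrix n *ᵥ x) := by
    rw [mulVec_mulVec, diffMatrix_mul_exp_neg_smul_coarseningMatrix, ← mulVec_mulVec]
  refine Fin.strictMono_iff_lt_succ.mpr fun i => sub_pos.mp ?_
  rw [← diffMatrix_mulVec, hinc]
  exact mulVec_apply_pos (exp_neg_smul_neumannLaplacian_apply_pos ht)
    (diffMatrix_mulVec_nonneg hx) (diffMatrix_mulVec_ne_zero (by rw [hx0, hx1]; exact one_pos)) i

/-- For `t > 0`, `x ↦ exp(-t A_n) x` is injective and maps `Δ_n` into its interior. -/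
theorem exp_neg_coarseningMatrix_maps_into_interior (n : ℕ) (hn : 1 ≤ n) (t : ℝ) (ht : 0 < t) :
    Function.Injective (fun x : Fin (n + 2) → ℝ =>
        (NormedSpace.exp ((-t) • coarseningMatrix n)).mulVec x) ∧
      ∀ x ∈ simplexDelta n,
        (NormedSpace.exp ((-t) • coarseningMatrix n)).mulVec x ∈ simplexDeltaInterior n :=
  exp_neg_coarseningMatrix_maps_into_interior_general n t ht
end

section
/- Let f: [0,t] → R be continuously differentiable. Then the indicatrix N(a) = #{s ∈ [0,t] : f(s) = a} satisfies ∫_R N(a) da = ∫_0^t |f'(s)| ds (Banach's indicatrix theorem for C^1 functions), where N is interpreted as an extended-real-valued measurable function. -/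
/-!
On the open set `V` of interior points where `f'` does not vanish, `f` is locally injective
(Darboux), so `V` splits into countably many disjoint Borel pieces on each of which `f` is
injective. The change of variables formula gives `|f '' C| = ∫_C |f'|` on each piece `C`, and the
sum of the indicators of the images `f '' C` is the number of solutions in `V`. What remains of
`[0,t]` are the endpoints and critical points: `|f'|` vanishes there almost everywhere, and their
image is null by Sard's lemma, so they change neither side.
-/

open MeasureTheory ENNReal

open Set Filter Topology Function

theorem Set.InjOn.encard_inter_preimage_singleton {α β : Type*} {f : α → β} {s : Set α}
    (hf : InjOn f s) (b : β) :
    ((s ∩ f ⁻¹' {b}).encard : ℝ≥0∞) = (f '' s).indicator 1 b := by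
  by_cases hb : b ∈ f '' s
  · obtain ⟨x, hx, rfl⟩ := hb
    have hfiber : s ∩ f ⁻¹' {f x} = {x} :=
      Subset.antisymm (fun y hy => hf hy.1 hx hy.2) (singleton_subset_iff.2 ⟨hx, rfl⟩)
    simp [hfiber, indicator_of_mem (mem_image_of_mem f hx)]
  · have hfiber : s ∩ f ⁻¹' {b} = ∅ :=
      eq_empty_of_forall_notMem fun x hx => hb ⟨x, hx.1, hx.2⟩
    simp [hfiber, indicator_of_notMem hb]

theorem encard_fiber_iUnion_eq_tsum_indicator {α β ι : Type*} [Countable ι]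
    [MeasurableSpace α] [MeasurableSingletonClass α] {f : α → β} {c : ι → Set α}
    (hdisj : Pairwise (Disjoint on c)) (hinj : ∀ i, InjOn f (c i)) (b : β) :
    ({x ∈ ⋃ i, c i | f x = b}.encard : ℝ≥0∞) = ∑' i, (f '' c i).indicator 1 b := by
  have hfiber : {x ∈ ⋃ i, c i | f x = b} = ⋃ i, c i ∩ f ⁻¹' {b} := by
    ext x; simp
  have hsub : ∀ i, (c i ∩ f ⁻¹' {b}).Subsingleton := fun i x hx y hy =>
    hinj i hx.1 hy.1 (hx.2.trans hy.2.symm)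
  rw [hfiber, ← Measure.count_apply (MeasurableSet.iUnion fun i => (hsub i).measurableSet),
    measure_iUnion (fun i j hij => (hdisj hij).mono inter_subset_left inter_subset_left)
      fun i => (hsub i).measurableSet]
  refine tsum_congr fun i => ?_
  rw [Measure.count_apply (hsub i).measurableSet, (hinj i).encard_inter_preimage_singleton]

theorem lintegral_encard_fiber_eq_of_measure_image_sdiff_eq_zero {α β : Type*}
    [MeasurableSpace β] {μ : Measure β} {f : α → β} {s t : Set α} (hts : t ⊆ s)
    (h : μ (f '' (s \ t)) = 0) :
    ∫⁻ y, ({x ∈ s | f x = y}.encard : ℝ≥0∞) ∂μ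
      = ∫⁻ y, ({x ∈ t | f x = y}.encard : ℝ≥0∞) ∂μ := by
  refine lintegral_congr_ae ?_
  filter_upwards [measure_eq_zero_iff_ae_notMem.1 h] with y hy
  congr 3
  ext x
  refine ⟨fun ⟨hxs, hxy⟩ => ⟨?_, hxy⟩, fun ⟨hxt, hxy⟩ => ⟨hts hxt, hxy⟩⟩
  by_contra hxt
  exact hy ⟨x, ⟨hxs, hxt⟩, hxy⟩

theorem setLIntegral_eq_of_subset_of_ae_sdiff_eq_zero {α : Type*} [MeasurableSpace α]
    {μ : Measure α} {F : α → ℝ≥0∞} {s t : Set α} (hs : MeasurableSet s) (ht : MeasurableSet t)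
    (hts : t ⊆ s) (h : ∀ᵐ x ∂μ, x ∈ s \ t → F x = 0) :
    ∫⁻ x in s, F x ∂μ = ∫⁻ x in t, F x ∂μ := by
  rw [← lintegral_inter_add_sdiff F s ht, inter_eq_right.2 hts,
    setLIntegral_congr_fun_ae (hs.diff ht) h, lintegral_zero, add_zero]

theorem exists_measurable_partition_injOn {α β : Type*} [TopologicalSpace α]
    [SecondCountableTopology α] [MeasurableSpace α] [OpensMeasurableSpace α] {f : α → β}
    {s : Set α} (hs : MeasurableSet s) (hf : ∀ x ∈ s, ∃ u ∈ 𝓝[s] x, InjOn f u) :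
    ∃ c : ℕ → Set α, (∀ n, MeasurableSet (c n)) ∧ Pairwise (Disjoint on c) ∧
      ⋃ n, c n = s ∧ ∀ n, InjOn f (c n) := by
  have hopen : ∀ x ∈ s, ∃ o, IsOpen o ∧ x ∈ o ∧ InjOn f (o ∩ s) := fun x hx => by
    obtain ⟨u, hu, hinj⟩ := hf x hx
    obtain ⟨o, ho, hxo, hou⟩ := mem_nhdsWithin.1 hu
    exact ⟨o, ho, hxo, hinj.mono hou⟩
  choose! o ho hxo hinj using hopen
  obtain ⟨T, hTs, hTc, hsT⟩ := TopologicalSpace.countable_cover_nhdsWithin fun x hx =>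
    inter_mem_nhdsWithin s ((ho x hx).mem_nhds (hxo x hx))
  rcases T.eq_empty_or_nonempty with rfl | hT
  · simp only [mem_empty_iff_false, iUnion_of_empty, iUnion_empty, subset_empty_iff] at hsT
    exact ⟨fun _ => ∅, fun _ => .empty, fun _ _ _ => disjoint_bot_left,
      by rw [iUnion_empty, hsT], fun _ => injOn_empty f⟩
  obtain ⟨e, rfl⟩ := hTc.exists_eq_range hT
  have he n : e n ∈ s := hTs (mem_range_self n)
  refine ⟨disjointed fun n => o (e n) ∩ s,
    MeasurableSet.disjointed fun n => (ho _ (he n)).measurableSet.inter hs,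
    disjoint_disjointed _, ?_, fun n => (hinj _ (he n)).mono (disjointed_subset _ n)⟩
  rw [iUnion_disjointed]
  exact (iUnion_subset fun n => inter_subset_right).antisymm (by simpa [inter_comm] using hsT)

theorem lintegral_encard_fiber_iUnion_eq_lintegral_abs_det_fderiv {E ι : Type*}
    [NormedAddCommGroup E] [NormedSpace ℝ E] [FiniteDimensional ℝ E] [MeasurableSpace E]
    [BorelSpace E] (μ : Measure E) [μ.IsAddHaarMeasure] [Countable ι] {f : E → E}
    {f' : E → E →L[ℝ] E} {c : ι → Set E} (hc : ∀ i, MeasurableSet (c i))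
    (hdisj : Pairwise (Disjoint on c))
    (hf' : ∀ i, ∀ x ∈ c i, HasFDerivWithinAt f (f' x) (c i) x) (hinj : ∀ i, InjOn f (c i)) :
    ∫⁻ y, ({x ∈ ⋃ i, c i | f x = y}.encard : ℝ≥0∞) ∂μ
      = ∫⁻ x in ⋃ i, c i, ENNReal.ofReal |(f' x).det| ∂μ := by
  have himage i : MeasurableSet (f '' c i) :=
    measurable_image_of_fderivWithin (hc i) (hf' i) (hinj i)
  calc ∫⁻ y, ({x ∈ ⋃ i, c i | f x = y}.encard : ℝ≥0∞) ∂μ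
      = ∫⁻ y, ∑' i, (f '' c i).indicator 1 y ∂μ := by
        simp_rw [encard_fiber_iUnion_eq_tsum_indicator hdisj hinj]
    _ = ∑' i, μ (f '' c i) := by
        rw [lintegral_tsum fun i => (measurable_one.indicator (himage i)).aemeasurable]
        simp_rw [lintegral_indicator_one (himage _)]
    _ = ∑' i, ∫⁻ x in c i, ENNReal.ofReal |(f' x).det| ∂μ := by
        simp_rw [lintegral_abs_det_fderiv_eq_addHaar_image μ (hc _) (hf' _) (hinj _)]
    _ = ∫⁻ x in ⋃ i, c i, ENNReal.ofReal |(f' x).det| ∂μ :=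
        (lintegral_iUnion hc hdisj _).symm

theorem Convex.injOn_of_hasDerivWithinAt_ne_zero {s : Set ℝ} (hs : Convex ℝ s)
    {f f' : ℝ → ℝ} (hf : ∀ x ∈ s, HasDerivWithinAt f (f' x) s x) (hf' : ∀ x ∈ s, f' x ≠ 0) :
    InjOn f s := by
  have hcont : ContinuousOn f s := fun x hx => (hf x hx).continuousWithinAt
  have hint : ∀ x ∈ interior s, HasDerivWithinAt f (f' x) (interior s) x := fun x hx =>
    (hf x (interior_subset hx)).mono interior_subset
  rcases hasDerivWithinAt_forall_lt_or_forall_gt_of_forall_ne hs hf hf' with hneg | hpos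
  · exact (strictAntiOn_of_hasDerivWithinAt_neg hs hcont hint
      fun x hx => hneg x (interior_subset hx)).injOn
  · exact (strictMonoOn_of_hasDerivWithinAt_pos hs hcont hint
      fun x hx => hpos x (interior_subset hx)).injOn

theorem IsOpen.lintegral_encard_fiber_eq_lintegral_abs_deriv {U : Set ℝ} (hU : IsOpen U)
    {f f' : ℝ → ℝ} (hf : ∀ x ∈ U, HasDerivAt f (f' x) x) (hf' : ∀ x ∈ U, f' x ≠ 0) :
    ∫⁻ y, ({x ∈ U | f x = y}.encard : ℝ≥0∞) = ∫⁻ x in U, ENNReal.ofReal |f' x| := by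
  have hloc : ∀ x ∈ U, ∃ u ∈ 𝓝[U] x, InjOn f u := fun x hx => by
    obtain ⟨ε, hε, hball⟩ := Metric.isOpen_iff.1 hU x hx
    exact ⟨_, mem_nhdsWithin_of_mem_nhds (Metric.ball_mem_nhds x hε),
      (convex_ball x ε).injOn_of_hasDerivWithinAt_ne_zero
        (fun y hy => (hf y (hball hy)).hasDerivWithinAt) fun y hy => hf' y (hball hy)⟩
  obtain ⟨c, hc, hdisj, rfl, hinj⟩ := exists_measurable_partition_injOn hU.measurableSet hloc
  have := lintegral_encard_fiber_iUnion_eq_lintegral_abs_det_fderiv volume hc hdisj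
    (fun n x hx => (hf x (mem_iUnion_of_mem n hx)).hasDerivWithinAt.hasFDerivWithinAt) hinj
  simpa [ContinuousLinearMap.det_toSpanSingleton] using this

theorem volume_image_eq_zero_of_hasDerivWithinAt_eq_zero {s : Set ℝ} {f f' : ℝ → ℝ}
    (hf : ∀ x ∈ s, HasDerivWithinAt f (f' x) s x) (hf' : ∀ x ∈ s, f' x = 0) :
    volume (f '' s) = 0 :=
  addHaar_image_eq_zero_of_det_fderivWithin_eq_zero volume
    (fun x hx => (hf x hx).hasFDerivWithinAt) fun x hx => by simp [hf' x hx]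

/-- Banach's indicatrix theorem for C¹ functions: the integral over `a ∈ ℝ` of the
number of solutions `s ∈ [0,t]` of `f(s) = a` equals the total variation
`∫_0^t |f'(s)| ds`. -/
theorem banach_indicatrix (t : ℝ) (ht : 0 < t) (f : ℝ → ℝ)
    (hf : ContDiffOn ℝ 1 f (Set.Icc 0 t)) :
    ∫⁻ a : ℝ, ({s ∈ Set.Icc (0 : ℝ) t | f s = a}.encard : ℝ≥0∞)
      = ∫⁻ s in Set.Icc (0 : ℝ) t, ENNReal.ofReal |derivWithin f (Set.Icc 0 t) s| := by
  set g := derivWithin f (Icc 0 t)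
  have hg : ∀ x ∈ Icc 0 t, HasDerivWithinAt f (g x) (Icc 0 t) x := fun x hx =>
    ((hf.differentiableOn one_ne_zero) x hx).hasDerivWithinAt
  set V := Ioo 0 t ∩ g ⁻¹' {0}ᶜ
  have hV : IsOpen V :=
    ((hf.continuousOn_derivWithin (uniqueDiffOn_Icc ht) le_rfl).mono Ioo_subset_Icc_self
      ).isOpen_inter_preimage isOpen_Ioo isOpen_compl_singleton
  have hVIcc : V ⊆ Icc 0 t := inter_subset_left.trans Ioo_subset_Icc_self
  have hcrit : Icc 0 t \ V ⊆ {0, t} ∪ {x ∈ Icc 0 t | g x = 0} := by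
    rintro x ⟨hx, hxV⟩
    by_cases hx' : x ∈ Ioo 0 t
    · exact Or.inr ⟨hx, not_not.1 fun hgx => hxV ⟨hx', hgx⟩⟩
    · exact Or.inl (Icc_sdiff_Ioo_same ht.le ▸ ⟨hx, hx'⟩)
  have hnull : volume (f '' (Icc 0 t \ V)) = 0 := by
    refine measure_mono_null (image_mono hcrit) ?_
    rw [image_union]
    exact measure_union_null ((toFinite _).image f |>.measure_zero _)
      (volume_image_eq_zero_of_hasDerivWithinAt_eq_zero
        (fun x hx => (hg x hx.1).mono fun y hy => hy.1) fun x hx => hx.2)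
  calc ∫⁻ a : ℝ, ({s ∈ Icc (0 : ℝ) t | f s = a}.encard : ℝ≥0∞)
      = ∫⁻ a : ℝ, ({s ∈ V | f s = a}.encard : ℝ≥0∞) :=
        lintegral_encard_fiber_eq_of_measure_image_sdiff_eq_zero hVIcc hnull
    _ = ∫⁻ s in V, ENNReal.ofReal |g s| :=
        hV.lintegral_encard_fiber_eq_lintegral_abs_deriv
          (fun x hx => (hg x (hVIcc hx)).hasDerivAt (Icc_mem_nhds hx.1.1 hx.1.2)) fun x hx => hx.2
    _ = ∫⁻ s in Icc 0 t, ENNReal.ofReal |g s| := by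
        refine (setLIntegral_eq_of_subset_of_ae_sdiff_eq_zero measurableSet_Icc
          hV.measurableSet hVIcc ?_).symm
        filter_upwards [measure_eq_zero_iff_ae_notMem.1 ((toFinite {0, t}).measure_zero volume)]
          with x hx hxV
        rcases hcrit hxV with hend | hzero
        · exact absurd hend hx
        · simp [hzero.2]
end

section
/- Let Φ: K × [0,ε) → R^d be a C^1 map where K is an open subset of a hyperplane in R^d, such that for each x ∈ K, s ↦ Φ(x,s) solves x' = F(x) with Φ(x,0) = x, where F is a C^1 vector field with F·n > 0 on K (n the unit normal into the relevant halfspace). Then for any compact Borel set B ⊆ K, lim_{t↓0} |B_t|/t = ∫_B F(x)·n(x) dx, where B_t = {Φ(x,s) : x ∈ B, 0 ≤ s ≤ t} and |·| denotes d-dimensional Lebesgue measure. -/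
/-!
In the coordinates `(x, s)` the volume of `B_t = Φ (B × [0, t])` is, by the change of variables
formula, `∫_{B × [0, t]} |J|` with `J` the Jacobian determinant of `(x, s) ↦ Φ x s`; this needs
injectivity of the flow on `B × [0, t]` for small `t`, which follows from uniqueness of solutions
of the ODE together with the strict growth of the normal coordinate along trajectories (`F·n > 0`).
On the hyperplane `s = 0` the derivative is the identity in the `x`-directions and `F` in the
`s`-direction, so `J (x, 0) = F(x)·n`. Continuity of `J` then gives
`|B_t| / t = (1/t) ∫_B ∫_0^t |J| → ∫_B J(·, 0)`.
-/

open MeasureTheory Filter Set Topology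

noncomputable def snocEquivL (d : ℕ) : ((Fin d → ℝ) × ℝ) ≃L[ℝ] (Fin (d + 1) → ℝ) :=
  LinearEquiv.toContinuousLinearEquiv
    { toFun := fun p => Fin.snoc p.1 p.2
      invFun := fun y => (Fin.init y, y (Fin.last d))
      map_add' := fun p q => by
        ext i; induction i using Fin.lastCases <;> simp
      map_smul' := fun c p => by
        ext i; induction i using Fin.lastCases <;> simp
      left_inv := fun p => by simp
      right_inv := fun y => Fin.snoc_init_self y }

@[simp] theorem snocEquivL_apply {d : ℕ} (p : (Fin d → ℝ) × ℝ) :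
    snocEquivL d p = Fin.snoc p.1 p.2 := rfl

@[simp] theorem snocEquivL_symm_apply {d : ℕ} (y : Fin (d + 1) → ℝ) :
    (snocEquivL d).symm y = (Fin.init y, y (Fin.last d)) := rfl

theorem measurePreserving_snocEquivL_symm (d : ℕ) :
    MeasurePreserving (snocEquivL d).symm volume volume := by
  have h : ⇑(snocEquivL d).symm =
      Prod.swap ∘ MeasurableEquiv.piFinSuccAbove (fun _ => ℝ) (Fin.last d) := by
    ext y <;> simp [MeasurableEquiv.piFinSuccAbove_apply]
  rw [h]
  exact Measure.measurePreserving_swap.comp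
    (volume_preserving_piFinSuccAbove (fun _ => ℝ) (Fin.last d))

theorem Pi.single_castSucc_eq_snoc {R : Type*} [Zero R] {n : ℕ} (k : Fin n) (a : R) :
    Pi.single (Fin.castSucc k) a = (Fin.snoc (Pi.single k a) 0 : Fin (n + 1) → R) := by
  ext i
  induction i using Fin.lastCases with
  | last => simp [(Fin.castSucc_lt_last k).ne']
  | cast m => simp [Pi.single_apply]

theorem LinearMap.det_eq_apply_last_of_apply_snoc_zero {R : Type*} [CommRing R] {n : ℕ}
    (L : (Fin (n + 1) → R) →ₗ[R] (Fin (n + 1) → R))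
    (hL : ∀ w, L (Fin.snoc w 0) = Fin.snoc w 0) :
    LinearMap.det L = L (Pi.single (Fin.last n) 1) (Fin.last n) := by
  set e : Fin (n + 1) → R := Pi.single (Fin.last n) 1
  set u := L e - e
  have hmat : LinearMap.toMatrix' L =
      1 + Matrix.replicateCol Unit u * Matrix.replicateRow Unit e := by
    ext i j
    rw [LinearMap.toMatrix'_apply]
    induction j using Fin.lastCases with
    | last => simp [u, e, Matrix.mul_apply, Matrix.one_apply, Pi.single_apply]
    | cast k =>
      rw [Pi.single_castSucc_eq_snoc, hL, ← Pi.single_castSucc_eq_snoc]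
      simp [e, Matrix.mul_apply, Matrix.one_apply, Pi.single_apply, (Fin.castSucc_lt_last k).ne]
  rw [← LinearMap.det_toMatrix', hmat, Matrix.det_one_add_replicateCol_mul_replicateRow]
  simp [u, e]

noncomputable def jacobianDetWithin {d : ℕ} (f : (Fin d → ℝ) × ℝ → (Fin (d + 1) → ℝ))
    (U : Set ((Fin d → ℝ) × ℝ)) (p : (Fin d → ℝ) × ℝ) : ℝ :=
  (fderivWithin ℝ f U p ∘L ↑(snocEquivL d).symm).det

theorem ContDiffOn.continuousOn_jacobianDetWithin {d : ℕ}
    {f : (Fin d → ℝ) × ℝ → (Fin (d + 1) → ℝ)} {U : Set ((Fin d → ℝ) × ℝ)}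
    (hf : ContDiffOn ℝ 1 f U) (hU : UniqueDiffOn ℝ U) : ContinuousOn (jacobianDetWithin f U) U :=
  ContinuousLinearMap.continuous_det.comp_continuousOn <|
    (hf.continuousOn_fderivWithin hU le_rfl).clm_comp continuousOn_const

theorem jacobianDetWithin_flow_of_hasDerivWithinAt {d : ℕ} {K : Set (Fin d → ℝ)}
    (hK : IsOpen K) {eps : ℝ} (heps : 0 < eps) {Φ : (Fin d → ℝ) → ℝ → (Fin (d + 1) → ℝ)}
    (hΦ0 : ∀ x ∈ K, Φ x 0 = Fin.snoc x 0) {x : Fin d → ℝ} (hx : x ∈ K)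
    (hΦ : DifferentiableWithinAt ℝ (fun p => Φ p.1 p.2) (K ×ˢ Ico 0 eps) (x, 0))
    {v : Fin (d + 1) → ℝ} (hv : HasDerivWithinAt (Φ x) v (Ico 0 eps) 0) :
    jacobianDetWithin (fun p => Φ p.1 p.2) (K ×ˢ Ico 0 eps) (x, 0) = v (Fin.last d) := by
  rw [jacobianDetWithin]
  set D := fderivWithin ℝ (fun p => Φ p.1 p.2) (K ×ˢ Ico 0 eps) (x, 0)
  have hD : HasFDerivWithinAt (fun p => Φ p.1 p.2) D (K ×ˢ Ico 0 eps) (x, 0) :=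
    hΦ.hasFDerivWithinAt
  have hhor : ∀ w, D (w, 0) = Fin.snoc w 0 := by
    have hcomp : HasFDerivWithinAt (fun w => Φ w 0)
        (D ∘L ContinuousLinearMap.inl ℝ (Fin d → ℝ) ℝ) K x :=
      (hD.comp x (ContinuousLinearMap.inl ℝ (Fin d → ℝ) ℝ).hasFDerivWithinAt
        fun w hw => (⟨hw, left_mem_Ico.2 heps⟩ : (w, 0) ∈ K ×ˢ Ico 0 eps) :)
    have hsnoc : HasFDerivWithinAt (fun w => Φ w 0)
        (↑(snocEquivL d) ∘L ContinuousLinearMap.inl ℝ (Fin d → ℝ) ℝ) K x :=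
      (ContinuousLinearMap.hasFDerivWithinAt _).congr (fun w hw => by simp [hΦ0 w hw])
        (by simp [hΦ0 x hx])
    intro w
    simpa using congr($((hK.uniqueDiffOn x hx).eq hcomp hsnoc) w)
  have hvert : D (0, 1) = v := by
    have hcomp : HasDerivWithinAt (Φ x) (D (0, 1)) (Ico 0 eps) 0 :=
      hD.comp_hasDerivWithinAt (x := 0) (f := fun s : ℝ => (x, s))
        (((hasDerivAt_const _ x).prodMk (hasDerivAt_id 0)).hasDerivWithinAt)
        fun s hs => (⟨hx, hs⟩ : (x, s) ∈ K ×ˢ Ico 0 eps)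
    exact (uniqueDiffOn_Ico 0 eps 0 (left_mem_Ico.2 heps)).eq_deriv _ hcomp hv
  have hinit : Fin.init (Pi.single (Fin.last d) 1 : Fin (d + 1) → ℝ) = 0 := by
    ext i
    simp [Fin.init, (Fin.castSucc_lt_last i).ne]
  rw [ContinuousLinearMap.det, LinearMap.det_eq_apply_last_of_apply_snoc_zero]
  · simp [hinit, hvert]
  · intro w
    simp [hhor]

theorem volume_image_eq_lintegral_abs_jacobianDetWithin {d : ℕ}
    {f : (Fin d → ℝ) × ℝ → (Fin (d + 1) → ℝ)} {U A : Set ((Fin d → ℝ) × ℝ)}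
    (hf : DifferentiableOn ℝ f U) (hAU : A ⊆ U) (hA : MeasurableSet A) (hinj : InjOn f A) :
    volume (f '' A) = ∫⁻ p in A, ENNReal.ofReal |jacobianDetWithin f U p| := by
  set e := snocEquivL d
  have hcov := lintegral_abs_det_fderiv_eq_addHaar_image volume
    (hA.preimage e.symm.continuous.measurable) (f := f ∘ e.symm)
    (f' := fun y => fderivWithin ℝ f U (e.symm y) ∘L ↑e.symm)
    (fun y hy => ((hf _ (hAU hy)).hasFDerivWithinAt.mono hAU).comp y
      e.symm.hasFDerivAt.hasFDerivWithinAt (mapsTo_preimage _ _))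
    (hinj.comp e.symm.injective.injOn (mapsTo_preimage _ _))
  rw [image_comp, image_preimage_eq A e.symm.surjective] at hcov
  rw [← hcov, ← (measurePreserving_snocEquivL_symm d).setLIntegral_comp_preimage_emb
    e.symm.toHomeomorph.measurableEmbedding
    (fun p => ENNReal.ofReal |jacobianDetWithin f U p|)]
  rfl

section

variable {X : Type*}

theorem tendsto_of_forall_eventually_mem_Icc {ι κ β : Type*} [TopologicalSpace β] [Preorder β]
    [OrderTopology β] {l : Filter ι} {l' : Filter κ} [l'.NeBot] {f : ι → β} {lo hi : κ → β}
    {L : β} (hlo : Tendsto lo l' (𝓝 L)) (hhi : Tendsto hi l' (𝓝 L))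
    (h : ∀ᶠ ε in l', ∀ᶠ t in l, f t ∈ Icc (lo ε) (hi ε)) : Tendsto f l (𝓝 L) := by
  refine tendsto_order.2 ⟨fun a ha => ?_, fun a ha => ?_⟩
  · obtain ⟨ε, hε, hfε⟩ := (((tendsto_order.1 hlo).1 a ha).and h).exists
    exact hfε.mono fun t ht => hε.trans_le ht.1
  · obtain ⟨ε, hε, hfε⟩ := (((tendsto_order.1 hhi).2 a ha).and h).exists
    exact hfε.mono fun t ht => ht.2.trans_lt hε

theorem eventually_forall_abs_sub_lt_of_continuousOn [PseudoMetricSpace X] {B : Set X}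
    (hB : IsCompact B) {b : ℝ} (hb : 0 < b) {g : X × ℝ → ℝ} (hg : ContinuousOn g (B ×ˢ Icc 0 b))
    {ε : ℝ} (hε : 0 < ε) :
    ∀ᶠ t in 𝓝[>] 0, ∀ x ∈ B, ∀ s ∈ Icc 0 t, |g (x, s) - g (x, 0)| < ε := by
  obtain ⟨δ, hδ, hclose⟩ := Metric.uniformContinuousOn_iff.1
    ((hB.prod isCompact_Icc).uniformContinuousOn_of_continuous hg) ε hε
  filter_upwards [Ioo_mem_nhdsGT (lt_min hδ hb)] with t ht x hx s hs
  have hst : s < min δ b := hs.2.trans_lt ht.2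
  have hdist : dist (x, s) (x, 0) < δ := by
    rw [Prod.dist_eq, dist_self, Real.dist_eq, sub_zero, abs_of_nonneg hs.1]
    exact max_lt hδ (hst.trans_le (min_le_left _ _))
  simpa [Real.dist_eq] using
    hclose (x, s) ⟨hx, hs.1, (hst.trans_le (min_le_right _ _)).le⟩ (x, 0)
      ⟨hx, left_mem_Icc.2 hb.le⟩ hdist

theorem eventually_forall_pos_of_continuousOn [PseudoMetricSpace X] {B : Set X}
    (hB : IsCompact B) {b : ℝ} (hb : 0 < b) {g : X × ℝ → ℝ} (hg : ContinuousOn g (B ×ˢ Icc 0 b))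
    (hpos : ∀ x ∈ B, 0 < g (x, 0)) :
    ∀ᶠ t in 𝓝[>] 0, ∀ x ∈ B, ∀ s ∈ Icc 0 t, 0 < g (x, s) := by
  obtain ⟨c, hc, hcg⟩ := hB.exists_forall_le'
    (hg.comp (continuousOn_id.prodMk continuousOn_const)
      fun x hx => (⟨hx, left_mem_Icc.2 hb.le⟩ : (x, 0) ∈ B ×ˢ Icc 0 b)) hpos
  filter_upwards [eventually_forall_abs_sub_lt_of_continuousOn hB hb hg hc] with t ht x hx s hs
  have hcx : c ≤ g (x, 0) := hcg x hx
  have hclose := abs_lt.1 (ht x hx s hs)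
  linarith [hclose.1]

variable [MeasurableSpace X] {μ : Measure X}

theorem tendsto_setLIntegral_ofReal_add [TopologicalSpace X] [OpensMeasurableSpace X]
    [IsFiniteMeasureOnCompacts μ] {B : Set X} (hB : IsCompact B) (hBm : MeasurableSet B)
    {m : X → ℝ} (hm : ContinuousOn m B) :
    Tendsto (fun c => ∫⁻ x in B, ENNReal.ofReal (m x + c) ∂μ) (𝓝 0)
      (𝓝 (∫⁻ x in B, ENNReal.ofReal (m x) ∂μ)) := by
  obtain ⟨M, hM⟩ := hB.exists_bound_of_continuousOn hm
  refine tendsto_lintegral_filter_of_dominated_convergence' (fun _ => ENNReal.ofReal (M + 1))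
    (Eventually.of_forall fun c => ((hm.add continuousOn_const).aemeasurable hBm).ennreal_ofReal)
    ?_ ?_ (Eventually.of_forall fun x => ?_)
  · filter_upwards [Ioo_mem_nhds neg_one_lt_zero one_pos] with c hc
    refine ae_restrict_of_forall_mem hBm fun x hx => ENNReal.ofReal_le_ofReal ?_
    have := (abs_le.1 ((Real.norm_eq_abs _).symm.trans_le (hM x hx))).2
    linarith [hc.2]
  · rw [lintegral_const, Measure.restrict_apply_univ]
    exact ENNReal.mul_ne_top ENNReal.ofReal_ne_top hB.measure_lt_top.ne
  · exact (ENNReal.continuous_ofReal.tendsto _).comp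
      ((continuous_const_add (m x)).tendsto' 0 _ (add_zero _))

theorem setLIntegral_prod_Icc_fst [SFinite μ] {B : Set X} {f : X → ENNReal}
    (hf : AEMeasurable f (μ.restrict B)) (t : ℝ) :
    ∫⁻ p in B ×ˢ Icc 0 t, f p.1 ∂μ.prod volume = (∫⁻ x in B, f x ∂μ) * ENNReal.ofReal t := by
  rw [← Measure.prod_restrict]
  simpa [Real.volume_Icc] using lintegral_prod_mul (ν := volume.restrict (Icc 0 t))
    (g := fun _ => 1) hf aemeasurable_const

theorem tendsto_setLIntegral_prod_Icc_div [PseudoMetricSpace X] [OpensMeasurableSpace X]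
    [IsFiniteMeasureOnCompacts μ] [SFinite μ] {B : Set X} (hB : IsCompact B)
    (hBm : MeasurableSet B) {b : ℝ} (hb : 0 < b) {g : X × ℝ → ℝ}
    (hg : ContinuousOn g (B ×ˢ Icc 0 b)) :
    Tendsto (fun t => (∫⁻ p in B ×ˢ Icc 0 t, ENNReal.ofReal (g p) ∂μ.prod volume) /
      ENNReal.ofReal t) (𝓝[>] 0) (𝓝 (∫⁻ x in B, ENNReal.ofReal (g (x, 0)) ∂μ)) := by
  set m : X → ℝ := fun x => g (x, 0)
  have hm : ContinuousOn m B := hg.comp (continuousOn_id.prodMk continuousOn_const)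
    fun x hx => (⟨hx, left_mem_Icc.2 hb.le⟩ : (x, 0) ∈ B ×ˢ Icc 0 b)
  have hslab : ∀ c, ∀ t > 0, ∫⁻ x in B, ENNReal.ofReal (m x + c) ∂μ =
      (∫⁻ p in B ×ˢ Icc 0 t, ENNReal.ofReal (m p.1 + c) ∂μ.prod volume) / ENNReal.ofReal t :=
    fun c t ht => by
      rw [setLIntegral_prod_Icc_fst (f := fun x => ENNReal.ofReal (m x + c))
        ((hm.add continuousOn_const).aemeasurable hBm).ennreal_ofReal t,
        ENNReal.mul_div_cancel_right (ENNReal.ofReal_pos.2 ht).ne' ENNReal.ofReal_ne_top]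
  have hlim := tendsto_setLIntegral_ofReal_add (μ := μ) hB hBm hm
  -- Once `g` is `ε`-close to `m` on `B × [0, t]`, the average lies between `∫_B (m ∓ ε)`.
  refine tendsto_of_forall_eventually_mem_Icc (l' := 𝓝[>] 0)
    (hlim.comp ((continuous_neg.tendsto' 0 0 neg_zero).mono_left nhdsWithin_le_nhds))
    (hlim.mono_left nhdsWithin_le_nhds) ?_
  filter_upwards [self_mem_nhdsWithin] with ε hε
  filter_upwards [eventually_forall_abs_sub_lt_of_continuousOn hB hb hg hε, self_mem_nhdsWithin]
    with t hclose ht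
  simp only [Function.comp_apply, hslab _ t ht]
  constructor <;> refine ENNReal.div_le_div_right (setLIntegral_mono' (hBm.prod measurableSet_Icc)
    fun p hp => ENNReal.ofReal_le_ofReal ?_) _ <;>
  · have := abs_lt.1 (hclose p.1 hp.1 p.2 hp.2)
    simp only [m]
    linarith [this.1, this.2]

end

theorem apply_sub_eq_of_autonomous_ODE {E : Type*} [NormedAddCommGroup E] [NormedSpace ℝ E]
    {v : E → E} {C : Set E} {L : NNReal} (hv : LipschitzOnWith L v C) {f g : ℝ → E} {T : ℝ}
    (hf : ∀ u ∈ Icc 0 T, HasDerivAt f (v (f u)) u ∧ f u ∈ C)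
    (hg : ∀ u ∈ Icc 0 T, HasDerivAt g (v (g u)) u ∧ g u ∈ C)
    {s s' : ℝ} (hs : 0 ≤ s) (hss' : s ≤ s') (hs' : s' ≤ T) (heq : f s = g s') :
    g (s' - s) = f 0 := by
  have hgI : ∀ u ∈ Icc (s' - s) s', u ∈ Icc 0 T := fun u hu => ⟨by linarith [hu.1], hu.2.trans hs'⟩
  have hfI : ∀ u ∈ Icc (s' - s) s', u - (s' - s) ∈ Icc 0 T :=
    fun u hu => ⟨by linarith [hu.1], by linarith [hu.2]⟩
  have hshift : ∀ u ∈ Icc (s' - s) s',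
      HasDerivAt (fun u => f (u - (s' - s))) (v (f (u - (s' - s)))) u :=
    fun u hu => (hf _ (hfI u hu)).1.comp_sub_const u (s' - s)
  have huniq := ODE_solution_unique_of_mem_Icc_left (v := fun _ => v) (s := fun _ => C)
    (fun _ _ => hv)
    (HasDerivAt.continuousOn fun u hu => (hg u (hgI u hu)).1)
    (fun u hu => (hg u (hgI u (Ioc_subset_Icc_self hu))).1.hasDerivWithinAt)
    (fun u hu => (hg u (hgI u (Ioc_subset_Icc_self hu))).2)
    (HasDerivAt.continuousOn hshift)
    (fun u hu => (hshift u (Ioc_subset_Icc_self hu)).hasDerivWithinAt)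
    (fun u hu => (hf _ (hfI u (Ioc_subset_Icc_self hu))).2)
    (by simp [heq])
  simpa using huniq ⟨le_rfl, by linarith⟩

theorem injOn_flow_of_last_pos {d : ℕ} {F : (Fin (d + 1) → ℝ) → (Fin (d + 1) → ℝ)}
    {C : Set (Fin (d + 1) → ℝ)} {L : NNReal} (hF : LipschitzOnWith L F C)
    {Φ : (Fin d → ℝ) → ℝ → (Fin (d + 1) → ℝ)} {B : Set (Fin d → ℝ)} {T : ℝ}
    (hΦ0 : ∀ x ∈ B, Φ x 0 = Fin.snoc x 0)
    (hΦ : ∀ x ∈ B, ∀ s ∈ Icc 0 T, HasDerivAt (Φ x) (F (Φ x s)) s ∧ Φ x s ∈ C)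
    (hpos : ∀ x ∈ B, ∀ s ∈ Icc 0 T, 0 < F (Φ x s) (Fin.last d)) :
    InjOn (fun p => Φ p.1 p.2) (B ×ˢ Icc 0 T) := by
  have hmono : ∀ x ∈ B, StrictMonoOn (fun s => Φ x s (Fin.last d)) (Icc 0 T) := fun x hx =>
    strictMonoOn_of_hasDerivWithinAt_pos (convex_Icc 0 T)
      ((continuous_apply _).comp_continuousOn
        (HasDerivAt.continuousOn fun s hs => (hΦ x hx s hs).1))
      (fun s hs => (hasDerivAt_pi.1 (hΦ x hx s (interior_subset hs)).1 _).hasDerivWithinAt)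
      (fun s hs => hpos x hx s (interior_subset hs))
  have key : ∀ p ∈ B ×ˢ Icc 0 T, ∀ q ∈ B ×ˢ Icc 0 T, p.2 ≤ q.2 →
      Φ p.1 p.2 = Φ q.1 q.2 → p = q := by
    rintro ⟨x, s⟩ ⟨hx, hs⟩ ⟨x', s'⟩ ⟨hx', hs'⟩ (hle : s ≤ s') heq
    have hback : Φ x' (s' - s) = Fin.snoc x 0 := by
      rw [← hΦ0 x hx]
      exact apply_sub_eq_of_autonomous_ODE hF (hΦ x hx) (hΦ x' hx') hs.1 hle hs'.2 heq
    have hδ : s' - s = 0 := (hmono x' hx').injOn ⟨by linarith, by linarith [hs'.2, hs.1]⟩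
      (left_mem_Icc.2 (hs.1.trans hs.2)) (by simp [hback, hΦ0 x' hx'])
    rw [hδ, hΦ0 x' hx'] at hback
    have hxx' : x' = x := by simpa using congrArg Fin.init hback
    rw [hxx', show s' = s by linarith]
  intro p hp q hq heq
  rcases le_total p.2 q.2 with h | h
  · exact key p hp q hq h heq
  · exact (key q hq p hp h heq.symm).symm

theorem exists_injOn_flow {d : ℕ} {F : (Fin (d + 1) → ℝ) → (Fin (d + 1) → ℝ)}
    (hF : LocallyLipschitz F) {B : Set (Fin d → ℝ)} (hB : IsCompact B)
    (hFpos : ∀ x ∈ B, 0 < F (Fin.snoc x 0) (Fin.last d)) {eps : ℝ} (heps : 0 < eps)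
    {Φ : (Fin d → ℝ) → ℝ → (Fin (d + 1) → ℝ)} (hΦ0 : ∀ x ∈ B, Φ x 0 = Fin.snoc x 0)
    (hΦode : ∀ x ∈ B, ∀ s ∈ Ico (0 : ℝ) eps, HasDerivAt (Φ x) (F (Φ x s)) s)
    (hΦ : ContinuousOn (fun p => Φ p.1 p.2) (B ×ˢ Ico 0 eps)) :
    ∃ T, 0 < T ∧ T < eps ∧ InjOn (fun p => Φ p.1 p.2) (B ×ˢ Icc 0 T) := by
  have hIcc : ∀ {T}, T < eps → B ×ˢ Icc 0 T ⊆ B ×ˢ Ico 0 eps :=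
    fun hT => prod_mono subset_rfl (Icc_subset_Ico_right hT)
  have hFΦ : ContinuousOn (fun p => F (Φ p.1 p.2) (Fin.last d)) (B ×ˢ Icc 0 (eps / 2)) :=
    (continuous_apply _).comp_continuousOn
      (hF.continuous.comp_continuousOn (hΦ.mono (hIcc (half_lt_self heps))))
  obtain ⟨T, hpos, hT⟩ := ((eventually_forall_pos_of_continuousOn hB (half_pos heps) hFΦ
    fun x hx => (hΦ0 x hx).symm ▸ hFpos x hx).and (Ioo_mem_nhdsGT heps)).exists
  have hC : IsCompact ((fun p => Φ p.1 p.2) '' (B ×ˢ Icc 0 T)) :=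
    (hB.prod isCompact_Icc).image_of_continuousOn (hΦ.mono (hIcc hT.2))
  obtain ⟨L, hL⟩ := hF.locallyLipschitzOn.exists_lipschitzOnWith_of_compact hC
  exact ⟨T, hT.1, hT.2, injOn_flow_of_last_pos hL hΦ0
    (fun x hx s hs =>
      ⟨hΦode x hx s ⟨hs.1, hs.2.trans_lt hT.2⟩, mem_image_of_mem _ (mk_mem_prod hx hs)⟩)
    hpos⟩

/-- Flow from a hyperplane: if `Φ(x,s)` solves `y' = F(y)` with `Φ(x,0) = x` for `x` in
an open piece `K` of the hyperplane `{y : y_d = 0}` (identified with `ℝ^d` via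
`x ↦ (x,0)`), and `F·n > 0` on `K` (here `n = e_d` is the unit normal), then for any
compact Borel `B ⊆ K`, the volume of `B_t = Φ(B × [0,t])` satisfies
`lim_{t↓0} |B_t|/t = ∫_B F(x)·n(x) dx`. -/
theorem flow_volume_derivative (d : ℕ)
    (K : Set (Fin d → ℝ)) (hK : IsOpen K)
    (F : (Fin (d + 1) → ℝ) → (Fin (d + 1) → ℝ)) (hF : ContDiff ℝ 1 F)
    (hFpos : ∀ x ∈ K, 0 < F (Fin.snoc x 0) (Fin.last d))
    (eps : ℝ) (heps : 0 < eps)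
    (Φ : (Fin d → ℝ) → ℝ → (Fin (d + 1) → ℝ))
    (hΦ0 : ∀ x ∈ K, Φ x 0 = Fin.snoc x 0)
    (hΦode : ∀ x ∈ K, ∀ s ∈ Set.Ico (0 : ℝ) eps, HasDerivAt (Φ x) (F (Φ x s)) s)
    (hΦC1 : ContDiffOn ℝ 1 (fun p : (Fin d → ℝ) × ℝ => Φ p.1 p.2) (K ×ˢ Set.Ico 0 eps))
    (B : Set (Fin d → ℝ)) (hB : IsCompact B) (hBm : MeasurableSet B) (hBK : B ⊆ K) :
    Tendsto
      (fun t : ℝ =>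
        volume {y : Fin (d + 1) → ℝ | ∃ x ∈ B, ∃ s ∈ Set.Icc (0 : ℝ) t, y = Φ x s}
          / ENNReal.ofReal t)
      (nhdsWithin 0 (Set.Ioi 0))
      (nhds (∫⁻ x in B, ENNReal.ofReal (F (Fin.snoc x 0) (Fin.last d)))) := by
  set Θ : (Fin d → ℝ) × ℝ → (Fin (d + 1) → ℝ) := fun p => Φ p.1 p.2
  set J := jacobianDetWithin Θ (K ×ˢ Ico 0 eps)
  have hBU : ∀ {T}, T < eps → B ×ˢ Icc 0 T ⊆ K ×ˢ Ico 0 eps :=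
    fun hT => prod_mono hBK (Icc_subset_Ico_right hT)
  obtain ⟨T, hT0, hTeps, hinj⟩ := exists_injOn_flow hF.locallyLipschitz hB
    (fun x hx => hFpos x (hBK hx)) heps (fun x hx => hΦ0 x (hBK hx))
    (fun x hx => hΦode x (hBK hx)) (hΦC1.continuousOn.mono (prod_mono hBK subset_rfl))
  have hJ : ContinuousOn (fun p => |J p|) (B ×ˢ Icc 0 T) :=
    ((hΦC1.continuousOn_jacobianDetWithin
      (hK.uniqueDiffOn.prod (uniqueDiffOn_Ico 0 eps))).mono (hBU hTeps)).abs
  have hJ0 : ∀ x ∈ B, |J (x, 0)| = F (Fin.snoc x 0) (Fin.last d) := fun x hx => by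
    have hv := (hΦode x (hBK hx) 0 (left_mem_Ico.2 heps)).hasDerivWithinAt (s := Ico 0 eps)
    rw [hΦ0 x (hBK hx)] at hv
    rw [← abs_of_pos (hFpos x (hBK hx))]
    exact congrArg abs (jacobianDetWithin_flow_of_hasDerivWithinAt hK heps hΦ0 (hBK hx)
      (hΦC1.differentiableOn one_ne_zero _ ⟨hBK hx, left_mem_Ico.2 heps⟩) hv)
  have hvol : ∀ t ∈ Ioc 0 T,
      volume {y : Fin (d + 1) → ℝ | ∃ x ∈ B, ∃ s ∈ Set.Icc (0 : ℝ) t, y = Φ x s} =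
        ∫⁻ p in B ×ˢ Icc 0 t, ENNReal.ofReal |J p| := fun t ht => by
    have hset : {y : Fin (d + 1) → ℝ | ∃ x ∈ B, ∃ s ∈ Set.Icc (0 : ℝ) t, y = Φ x s} =
        Θ '' (B ×ˢ Icc 0 t) := by
      ext y
      simp [Θ, eq_comm]
    rw [hset, volume_image_eq_lintegral_abs_jacobianDetWithin
      (hΦC1.differentiableOn one_ne_zero) (hBU (ht.2.trans_lt hTeps))
      (hBm.prod measurableSet_Icc) (hinj.mono (prod_mono subset_rfl (Icc_subset_Icc_right ht.2)))]
  have hlim := tendsto_setLIntegral_prod_Icc_div (μ := volume) hB hBm hT0 hJ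
  rw [setLIntegral_congr_fun hBm fun x hx => congrArg ENNReal.ofReal (hJ0 x hx)] at hlim
  refine hlim.congr' ?_
  filter_upwards [Ioc_mem_nhdsGT hT0] with t ht
  rw [hvol t ht]
  rfl
end
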